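/- Let C be a pointed category with finite sums, D a pointed category with finite sums, E an abelian category, and F: C → D, G: D → E functors with F reduced. Then the natural transformation T_n(F*t_n^G): T_n(G ∘ F) → T_n(T_n G ∘ F) induced by the canonical epimorphism t_n^G: G → T_n G is an isomorphism. -/

import Mathlib

open CategoryTheory CategoryTheory.Limits

universe u v w

variable {C : Type u} [Category.{v} C] [HasZeroMorphisms C] [HasFiniteCoproducts C]

/-- The retraction `r_k : X₁ ∨ ⋯ ∨ X_n → X₁ ∨ ⋯ ∨ X̂_k ∨ ⋯ ∨ X_n` killing the
`k`-th summand. -/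
noncomputable def rhat {ι : Type} [Fintype ι] [DecidableEq ι] (X : ι → C) (k : ι) :
    (∐ X) ⟶ ∐ (fun i : {i : ι // i ≠ k} => X i.1) :=
  Sigma.desc (fun i =>
    if h : i = k then 0 else Sigma.ι (fun i : {i : ι // i ≠ k} => X i.1) ⟨i, h⟩)

/-- The cross-effect `cr F (X₁,…,X_n)` as a subgroup of `F(X₁ ∨ ⋯ ∨ X_n)`. -/
noncomputable def crSub (F : C ⥤ AddCommGrpCat.{w}) {ι : Type} [Fintype ι]
    [DecidableEq ι] (X : ι → C) : AddSubgroup (F.obj (∐ X)) :=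
  ⨅ k : ι, AddMonoidHom.ker (F.map (rhat X k)).hom

/-- A functor to `Ab` is polynomial of degree `≤ n` if its `(n+1)`-st
cross-effect vanishes. -/
noncomputable def PolyLe (n : ℕ) (F : C ⥤ AddCommGrpCat.{w}) : Prop :=
  ∀ X : Fin (n + 1) → C, crSub F X = ⊥

/-- `(T, t)` is the degree-`n` Taylorization of `G`: `T` is polynomial of
degree `≤ n` and `t : G ⟶ T` is universal among natural transformations from
`G` to polynomial functors of degree `≤ n` (the unit of the adjunction of
Proposition `Tn-prop`). -/
noncomputable def IsTaylorization (n : ℕ) (G T : C ⥤ AddCommGrpCat.{w})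
    (t : G ⟶ T) : Prop :=
  PolyLe n T ∧
    ∀ (H : C ⥤ AddCommGrpCat.{w}), PolyLe n H →
      ∀ s : G ⟶ H, ∃! u : T ⟶ H, t ≫ u = s

/-!
The kernel of `t_n^G` at `Y` is the subgroup generated by the images `G f (c)` of cross-effect
elements `c ∈ cr_{n+1} G (W₀, …, Wₙ)` under maps `f : W₀ ∨ ⋯ ∨ Wₙ ⟶ Y` (the quotient by it is
polynomial by inclusion–exclusion), and `t_n^G` is surjective. When `F` is reduced, such a
generator at `Y = F X` factors through the fold map `F (X ∨ ⋯ ∨ X) ⟶ F X` as the image of a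
cross-effect element of `G ∘ F`, so `t_n^{G ∘ F}` kills it. Hence `t_n^{G ∘ F}` factors through
the epimorphism `F^* t_n^G`, and the factorization induces an inverse of `u`.
-/

section CrossEffects

variable {ι : Type} [Fintype ι] [DecidableEq ι]

lemma mem_crSub_iff (P : C ⥤ AddCommGrpCat.{w}) (X : ι → C) (c : P.obj (∐ X)) :
    c ∈ crSub P X ↔ ∀ k, P.map (rhat X k) c = 0 := by
  simp only [crSub, AddSubgroup.mem_iInf, AddMonoidHom.mem_ker]

lemma app_mem_crSub {P Q : C ⥤ AddCommGrpCat.{w}} (s : P ⟶ Q) (X : ι → C)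
    {c : P.obj (∐ X)} (hc : c ∈ crSub P X) : s.app (∐ X) c ∈ crSub Q X := by
  rw [mem_crSub_iff] at hc ⊢
  intro k
  rw [← NatTrans.naturality_apply, hc k, map_zero]

end CrossEffects

namespace PolyLe

variable {n : ℕ} {P Q : C ⥤ AddCommGrpCat.{w}}

lemma app_eq_zero (hQ : PolyLe n Q) (s : P ⟶ Q) (X : Fin (n + 1) → C) {c : P.obj (∐ X)}
    (hc : c ∈ crSub P X) : s.app (∐ X) c = 0 := by
  simpa [hQ X] using app_mem_crSub s X hc

lemma of_injective (hQ : PolyLe n Q) (s : P ⟶ Q) (hs : ∀ Y, Function.Injective (s.app Y)) :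
    PolyLe n P := fun X =>
  eq_bot_iff.2 fun _ hc => (hs _) ((hQ.app_eq_zero s X hc).trans (map_zero _).symm)

end PolyLe

namespace IsTaylorization

variable {n : ℕ} {G T : C ⥤ AddCommGrpCat.{w}} {t : G ⟶ T}

lemma hom_ext (hT : IsTaylorization n G T t) {H : C ⥤ AddCommGrpCat.{w}} (hH : PolyLe n H)
    {a b : T ⟶ H} (hab : t ≫ a = t ≫ b) : a = b :=
  (hT.2 H hH _).unique hab rfl

/-- The image of `t` is a polynomial subfunctor of `T` through which `t` factors, so by
universality its inclusion has a section. -/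
lemma epi (hT : IsTaylorization n G T t) : Epi t := by
  have hι : PolyLe n (image t) := hT.1.of_injective (image.ι t) fun Y =>
    (AddCommGrpCat.mono_iff_injective _).1 ((NatTrans.mono_iff_mono_app _).1 inferInstance Y)
  obtain ⟨r, hr, -⟩ := hT.2 _ hι (factorThruImage t)
  have : IsSplitEpi (image.ι t) :=
    ⟨⟨⟨r, hT.hom_ext hT.1 (by rw [reassoc_of% hr, image.fac, Category.comp_id])⟩⟩⟩
  have := isIso_of_mono_of_isSplitEpi (image.ι t)
  rw [← image.fac t]
  infer_instance

end IsTaylorization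

lemma Finset.sum_neg_one_pow_card_compl_zsmul_eq_zero {ι A : Type*} [Fintype ι] [DecidableEq ι]
    [AddCommGroup A] (f : Finset ι → A) (k : ι) (hf : ∀ S, k ∉ S → f (insert k S) = f S) :
    ∑ S : Finset ι, (-1 : ℤ) ^ Sᶜ.card • f S = 0 := by
  rw [← Finset.powerset_univ, ← Finset.insert_erase (Finset.mem_univ k),
    Finset.sum_powerset_insert (Finset.notMem_erase k _), ← Finset.sum_add_distrib]
  refine Finset.sum_eq_zero fun S hS => ?_
  have hk : k ∉ S := fun h => Finset.notMem_erase k _ (Finset.mem_powerset.1 hS h)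
  rw [hf S hk, Finset.compl_insert, ← add_zsmul,
    ← Finset.card_erase_add_one (Finset.mem_compl.2 hk), pow_succ]
  simp

section InclusionExclusion

variable {ι : Type} [Fintype ι] [DecidableEq ι] (X : ι → C)

noncomputable def partialProj (S : Finset ι) : (∐ X) ⟶ (∐ X) :=
  Sigma.desc fun i => if i ∈ S then Sigma.ι X i else 0

lemma partialProj_univ : partialProj X Finset.univ = 𝟙 (∐ X) := by
  ext i
  simp [partialProj]

lemma partialProj_insert_comp_rhat (S : Finset ι) (k : ι) :
    partialProj X (insert k S) ≫ rhat X k = partialProj X S ≫ rhat X k := by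
  ext i
  by_cases hik : i = k
  · subst hik
    by_cases hiS : i ∈ S <;> simp [partialProj, rhat, hiS]
  · simp [partialProj, rhat, hik]

lemma partialProj_eq_rhat_comp (S : Finset ι) {k : ι} (hk : k ∉ S) :
    partialProj X S = rhat X k ≫ Sigma.desc fun i : {i : ι // i ≠ k} =>
      if i.1 ∈ S then Sigma.ι X i.1 else 0 := by
  ext i
  by_cases hik : i = k
  · subst hik
    simp [partialProj, rhat, hk]
  · simp [partialProj, rhat, hik]

lemma sum_partialProj_mem_crSub (G : C ⥤ AddCommGrpCat.{w}) (x : G.obj (∐ X)) :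
    ∑ S : Finset ι, (-1 : ℤ) ^ Sᶜ.card • G.map (partialProj X S) x ∈ crSub G X := by
  rw [mem_crSub_iff]
  intro k
  simp only [map_sum, map_zsmul, ← Functor.map_comp_apply]
  exact Finset.sum_neg_one_pow_card_compl_zsmul_eq_zero _ k fun S _ => by
    rw [partialProj_insert_comp_rhat]

end InclusionExclusion

section CrossEffectSpan

variable (n : ℕ) (G : C ⥤ AddCommGrpCat.{w})

noncomputable def crSpan (Y : C) : AddSubgroup (G.obj Y) :=
  AddSubgroup.closure {y | ∃ (W : Fin (n + 1) → C) (f : (∐ W) ⟶ Y) (c : G.obj (∐ W)),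
    c ∈ crSub G W ∧ G.map f c = y}

variable {n G}

lemma map_mem_crSpan {W : Fin (n + 1) → C} {Y : C} (f : (∐ W) ⟶ Y) {c : G.obj (∐ W)}
    (hc : c ∈ crSub G W) : G.map f c ∈ crSpan n G Y :=
  AddSubgroup.subset_closure ⟨W, f, c, hc, rfl⟩

lemma crSpan_le_comap {Y Z : C} (f : Y ⟶ Z) :
    crSpan n G Y ≤ (crSpan n G Z).comap (G.map f).hom := by
  rw [crSpan, AddSubgroup.closure_le]
  rintro _ ⟨W, g, c, hc, rfl⟩
  simpa only [SetLike.mem_coe, AddSubgroup.mem_comap, ← Functor.map_comp_apply]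
    using map_mem_crSpan (g ≫ f) hc

lemma mem_crSpan_of_forall_rhat {X : Fin (n + 1) → C} {x : G.obj (∐ X)}
    (hx : ∀ k, G.map (rhat X k) x ∈ crSpan n G _) : x ∈ crSpan n G (∐ X) := by
  have hsum := map_mem_crSpan (𝟙 _) (sum_partialProj_mem_crSub X G x)
  rw [← Finset.add_sum_erase _ _ (Finset.mem_univ Finset.univ)] at hsum
  simp only [Finset.compl_univ, Finset.card_empty, pow_zero, one_zsmul, partialProj_univ,
    G.map_id, AddCommGrpCat.id_apply] at hsum
  refine (AddSubgroup.add_mem_cancel_right _ (AddSubgroup.sum_mem _ fun S hS => ?_)).1 hsum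
  obtain ⟨k, hk⟩ : ∃ k, k ∉ S := by
    simpa [Finset.eq_univ_iff_forall] using (Finset.mem_erase.1 hS).1
  rw [partialProj_eq_rhat_comp X S hk, Functor.map_comp_apply]
  refine AddSubgroup.zsmul_mem _ ?_ _
  exact crSpan_le_comap _ (hx k)

variable (n G)

noncomputable def quotCrSpan : C ⥤ AddCommGrpCat.{w} where
  obj Y := AddCommGrpCat.of (G.obj Y ⧸ crSpan n G Y)
  map f := AddCommGrpCat.ofHom (QuotientAddGroup.map _ _ (G.map f).hom (crSpan_le_comap f))
  map_id Y := by
    ext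
    simp
  map_comp f g := by
    ext
    simp

noncomputable def toQuotCrSpan : G ⟶ quotCrSpan n G where
  app Y := AddCommGrpCat.ofHom (QuotientAddGroup.mk' (crSpan n G Y))

lemma polyLe_quotCrSpan : PolyLe n (quotCrSpan n G) := fun X => by
  refine eq_bot_iff.2 fun c hc => ?_
  rw [mem_crSub_iff] at hc
  obtain ⟨x, rfl⟩ := QuotientAddGroup.mk'_surjective (crSpan n G (∐ X)) c
  exact AddSubgroup.mem_bot.2 <| (QuotientAddGroup.eq_zero_iff x).2 <|
    mem_crSpan_of_forall_rhat fun k => (QuotientAddGroup.eq_zero_iff _).1 (hc k)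

end CrossEffectSpan

lemma IsTaylorization.mem_crSpan_of_app_eq_zero {n : ℕ} {G T : C ⥤ AddCommGrpCat.{w}}
    {t : G ⟶ T} (hT : IsTaylorization n G T t) {Y : C} {x : G.obj Y} (hx : t.app Y x = 0) :
    x ∈ crSpan n G Y := by
  obtain ⟨r, hr, -⟩ := hT.2 _ (polyLe_quotCrSpan n G) (toQuotCrSpan n G)
  have : (toQuotCrSpan n G).app Y x = 0 := by
    rw [← hr, NatTrans.comp_app, ConcreteCategory.comp_apply, hx, map_zero]
  exact (QuotientAddGroup.eq_zero_iff _).1 this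

open ZeroObject in
lemma preservesZeroMorphisms_of_isZero_obj_zero {A B : Type*} [Category A] [Category B]
    [HasZeroMorphisms A] [HasZeroMorphisms B] [HasZeroObject A] {F : A ⥤ B}
    (hF : IsZero (F.obj 0)) : F.PreservesZeroMorphisms where
  map_zero X Y := by
    rw [← zero_comp (X := X) (f := (0 : (0 : A) ⟶ Y)), F.map_comp, hF.eq_of_src (F.map _) 0,
      comp_zero]

section Reduced

variable {D : Type*} [Category D] [HasZeroMorphisms D] [HasFiniteCoproducts D]

lemma map_mem_crSub_comp (F : C ⥤ D) (G : D ⥤ AddCommGrpCat.{w}) {ι : Type} [Fintype ι]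
    [DecidableEq ι] {W : ι → D} {V : ι → C} (φ : (∐ W) ⟶ F.obj (∐ V))
    (hφ : ∀ k, ∃ ψ : (∐ fun i : {i // i ≠ k} => W i) ⟶ F.obj (∐ fun i : {i // i ≠ k} => V i),
      φ ≫ F.map (rhat V k) = rhat W k ≫ ψ)
    {c : G.obj (∐ W)} (hc : c ∈ crSub G W) : G.map φ c ∈ crSub (F ⋙ G) V := by
  rw [mem_crSub_iff] at hc ⊢
  intro k
  obtain ⟨ψ, hψ⟩ := hφ k
  rw [Functor.comp_map, ← Functor.map_comp_apply, hψ, Functor.map_comp_apply, hc k, map_zero]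

lemma crSpan_le_ker_app (n : ℕ) (F : C ⥤ D) [F.PreservesZeroMorphisms]
    (G : D ⥤ AddCommGrpCat.{w}) {T : C ⥤ AddCommGrpCat.{w}} (hT : PolyLe n T) (t : F ⋙ G ⟶ T)
    (X : C) : crSpan n G (F.obj X) ≤ (t.app X).hom.ker := by
  rw [crSpan, AddSubgroup.closure_le]
  rintro _ ⟨W, f, c, hc, rfl⟩
  let V : Fin (n + 1) → C := fun _ => X
  let φ : (∐ W) ⟶ F.obj (∐ V) := Sigma.desc fun i => Sigma.ι W i ≫ f ≫ F.map (Sigma.ι V i)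
  have hf : f = φ ≫ F.map (Sigma.desc fun _ => 𝟙 X) := by
    ext i
    simp [φ, V, ← F.map_comp]
  have hφ : G.map φ c ∈ crSub (F ⋙ G) V := by
    refine map_mem_crSub_comp F G φ (fun k => ⟨Sigma.desc fun i =>
      Sigma.ι W i.1 ≫ f ≫ F.map (Sigma.ι (fun i : {i // i ≠ k} => V i) i), ?_⟩) hc
    ext i
    by_cases hik : i = k
    · subst hik
      simp [φ, rhat, ← F.map_comp]
    · simp [φ, rhat, hik, ← F.map_comp]
  change t.app X (G.map f c) = 0
  rw [hf, Functor.map_comp_apply]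
  change t.app X ((F ⋙ G).map _ (G.map φ c)) = 0
  rw [NatTrans.naturality_apply, hT.app_eq_zero t V hφ, map_zero]

lemma IsTaylorization.kernel_ι_whiskerLeft_comp_eq_zero {n : ℕ} {G TG : D ⥤ AddCommGrpCat.{w}}
    {tG : G ⟶ TG} (hTG : IsTaylorization n G TG tG) (F : C ⥤ D) [F.PreservesZeroMorphisms]
    {T : C ⥤ AddCommGrpCat.{w}} (hT : PolyLe n T) (t : F ⋙ G ⟶ T) :
    kernel.ι (F.whiskerLeft tG) ≫ t = 0 := by
  ext X y
  refine crSpan_le_ker_app n F G hT t X (hTG.mem_crSpan_of_app_eq_zero ?_)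
  have h := ConcreteCategory.congr_hom
    (NatTrans.congr_app (kernel.condition (F.whiskerLeft tG)) X) y
  simp only [NatTrans.comp_app, ConcreteCategory.comp_apply, Functor.whiskerLeft_app,
    NatTrans.app_zero, AddCommGrpCat.zero_apply] at h
  exact h

end Reduced

open ZeroObject in
theorem taylor_comp_taylor_iso_general
    {D : Type u'} [Category.{v'} D] [HasZeroMorphisms D] [HasFiniteCoproducts D]
    [HasZeroObject C]
    (n : ℕ) (F : C ⥤ D) (hF : IsZero (F.obj 0))
    (G : D ⥤ AddCommGrpCat.{w})
    (TG : D ⥤ AddCommGrpCat.{w}) (tG : G ⟶ TG)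
    (hTG : IsTaylorization n G TG tG)
    (T₁ : C ⥤ AddCommGrpCat.{w}) (t₁ : F ⋙ G ⟶ T₁)
    (hT₁ : IsTaylorization n (F ⋙ G) T₁ t₁)
    (T₂ : C ⥤ AddCommGrpCat.{w}) (t₂ : F ⋙ TG ⟶ T₂)
    (hT₂ : IsTaylorization n (F ⋙ TG) T₂ t₂)
    (u : T₁ ⟶ T₂) (hu : t₁ ≫ u = CategoryTheory.Functor.whiskerLeft F tG ≫ t₂) :
    IsIso u := by
  have := preservesZeroMorphisms_of_isZero_obj_zero hF
  have : Epi (F.whiskerLeft tG) :=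
    (NatTrans.epi_iff_epi_app _).2 fun X => (NatTrans.epi_iff_epi_app tG).1 hTG.epi (F.obj X)
  have hker := hTG.kernel_ι_whiskerLeft_comp_eq_zero F hT₁.1 t₁
  obtain ⟨v, hv, -⟩ := hT₂.2 T₁ hT₁.1 (Abelian.epiDesc _ t₁ hker)
  refine ⟨v, hT₁.hom_ext hT₁.1 ?_, hT₂.hom_ext hT₂.1 ?_⟩
  · rw [reassoc_of% hu, hv, Abelian.comp_epiDesc, Category.comp_id]
  · rw [reassoc_of% hv, Category.comp_id, ← cancel_epi (F.whiskerLeft tG),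
      Abelian.comp_epiDesc_assoc, hu]

open ZeroObject in
/-- Let `C`, `D` be pointed categories with finite sums, `E`
an abelian category (here `Ab`), and `F : C ⥤ D`, `G : D ⥤ E` functors with `F`
reduced.  Then the natural map `T_n(F^* t_n^G) : T_n(G ∘ F) ⟶ T_n(T_n G ∘ F)`
induced by the canonical epimorphism `t_n^G : G ⟶ T_n G` is an isomorphism.
(The Taylorizations are characterized by their universal property; the induced
map is the unique `u` with `t₁ ≫ u = (F ▹ t_G) ≫ t₂`.) -/
theorem taylor_comp_taylor_iso
    {D : Type u'} [Category.{v'} D] [HasZeroMorphisms D] [HasFiniteCoproducts D]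
    [HasZeroObject C] [HasZeroObject D]
    (n : ℕ) (F : C ⥤ D) (hF : IsZero (F.obj 0))
    (G : D ⥤ AddCommGrpCat.{w})
    (TG : D ⥤ AddCommGrpCat.{w}) (tG : G ⟶ TG)
    (hTG : IsTaylorization n G TG tG)
    (T₁ : C ⥤ AddCommGrpCat.{w}) (t₁ : F ⋙ G ⟶ T₁)
    (hT₁ : IsTaylorization n (F ⋙ G) T₁ t₁)
    (T₂ : C ⥤ AddCommGrpCat.{w}) (t₂ : F ⋙ TG ⟶ T₂)
    (hT₂ : IsTaylorization n (F ⋙ TG) T₂ t₂)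
    (u : T₁ ⟶ T₂) (hu : t₁ ≫ u = CategoryTheory.Functor.whiskerLeft F tG ≫ t₂) :
    IsIso u :=
  taylor_comp_taylor_iso_general n F hF G TG tG hTG T₁ t₁ hT₁ T₂ t₂ hT₂ u hu
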